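/- arXiv:2203.05816 — 2 statements merged into one kernel-verified Lean document; each statement's English description precedes it below -/
import Mathlib

section
/- For every client index k in {1,...,K}, the square root of the Jensen–Shannon divergence between the adversary's belief after observing the unprotected information and the prior is bounded by the Bayesian privacy leakage plus a total-variation term: (1/K)·Σ_{k=1}^K √JS(f^O_k ‖ f_{B,k}) ≤ ε_p + (1/K)·Σ_{k=1}^K (1/2)·(e^{2ξ} − 1)·TV(P^O_k ‖ P^S_k), where ε_p = (1/K)·Σ_{k=1}^K √JS(f^A_k ‖ f_{B,k}). -/
open MeasureTheory
open scoped ENNReal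

/-- Jensen–Shannon divergence between two probability densities `p, q` on `(𝒟, μ)`:
`JS(p ‖ q) = (1/2)∫ p·log(p/m) dμ + (1/2)∫ q·log(q/m) dμ` with `m = (p+q)/2`. -/
noncomputable def JSdiv {α : Type*} [MeasurableSpace α] (μ : Measure α) (p q : α → ℝ) : ℝ :=
  (1 / 2) * ∫ d, p d * Real.log (p d / ((p d + q d) / 2)) ∂μ
    + (1 / 2) * ∫ d, q d * Real.log (q d / ((p d + q d) / 2)) ∂μ

/-- Total variation distance between two measures:
`TV(P ‖ Q) = sup_{A measurable} |P(A) − Q(A)|`. -/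
noncomputable def TV {α : Type*} [MeasurableSpace α] (P Q : Measure α) : ℝ :=
  ⨆ A : { A : Set α // MeasurableSet A }, |(P A).toReal - (Q A).toReal|

set_option linter.unusedSectionVars false
set_option linter.unusedVariables false


noncomputable def ell (t : ℝ) : ℝ := t * Real.log (2*t/(1+t)) + Real.log (2/(1+t))

lemma one_add_pos {t : ℝ} (ht : 0 < t) : (0:ℝ) < 1 + t := by linarith

lemma logr_eq {t : ℝ} (ht : 0 < t) :
    Real.log (2*t/(1+t)) = Real.log 2 + Real.log t - Real.log (1+t) := by
  rw [Real.log_div (by positivity) (by positivity), Real.log_mul (by norm_num) ht.ne']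

lemma logq_eq {t : ℝ} (ht : 0 < t) :
    Real.log (2/(1+t)) = Real.log 2 - Real.log (1+t) := by
  rw [Real.log_div (by norm_num) (by positivity)]

lemma hasDerivAt_ell {t : ℝ} (ht : 0 < t) :
    HasDerivAt ell (Real.log (2*t/(1+t))) t := by
  have h1 : HasDerivAt (fun s : ℝ => Real.log s) t⁻¹ t := Real.hasDerivAt_log ht.ne'
  have h2 : HasDerivAt (fun s : ℝ => 1 + s) 1 t := (hasDerivAt_id t).const_add 1
  have h3 : HasDerivAt (fun s : ℝ => Real.log (1+s)) (1+t)⁻¹ t := by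
    simpa using h2.log (one_add_pos ht).ne'
  have h4 : HasDerivAt (fun s : ℝ => s * (Real.log 2 + Real.log s - Real.log (1+s))
      + (Real.log 2 - Real.log (1+s)))
      (1 * (Real.log 2 + Real.log t - Real.log (1+t)) + t * (0 + t⁻¹ - (1+t)⁻¹)
        + (0 - (1+t)⁻¹)) t := by
    exact (((hasDerivAt_id t).mul (((hasDerivAt_const t (Real.log 2)).add h1).sub h3)).add
      ((hasDerivAt_const t (Real.log 2)).sub h3))
  have heq : (fun s : ℝ => s * (Real.log 2 + Real.log s - Real.log (1+s))
      + (Real.log 2 - Real.log (1+s))) =ᶠ[nhds t] ell := by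
    filter_upwards [eventually_gt_nhds ht] with s hs
    rw [ell, logr_eq hs, logq_eq hs]
  have := h4.congr_of_eventuallyEq heq.symm
  refine this.congr_deriv ?_
  rw [logr_eq ht]
  have : t * (0 + t⁻¹ - (1+t)⁻¹) + (0 - (1+t)⁻¹) = 0 := by
    field_simp
    ring
  linarith [this]

noncomputable def elld (t : ℝ) : ℝ := Real.log (2*t/(1+t))

lemma elld_nonneg {t : ℝ} (ht : 1 ≤ t) : 0 ≤ elld t :=
  Real.log_nonneg (by rw [le_div_iff₀ (by positivity)]; linarith)

lemma elld_nonpos {t : ℝ} (ht0 : 0 < t) (ht : t ≤ 1) : elld t ≤ 0 :=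
  Real.log_nonpos (by positivity) (by rw [div_le_one (by positivity)]; linarith)

lemma elld_pos {t : ℝ} (ht : 1 < t) : 0 < elld t :=
  Real.log_pos (by rw [lt_div_iff₀ (by positivity)]; linarith)

lemma elld_neg {t : ℝ} (ht0 : 0 < t) (ht : t < 1) : elld t < 0 :=
  Real.log_neg (by positivity) (by rw [div_lt_one (by positivity)]; linarith)

lemma ell_one : ell 1 = 0 := by norm_num [ell]

lemma ell_cont {t : ℝ} (ht : 0 < t) : ContinuousAt ell t := (hasDerivAt_ell ht).continuousAt

lemma ell_pos_of_gt {t : ℝ} (ht : 1 < t) : 0 < ell t := by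
  have hmono : StrictMonoOn ell (Set.Ici 1) := by
    apply strictMonoOn_of_hasDerivWithinAt_pos (convex_Ici 1)
      (fun s hs => (ell_cont (lt_of_lt_of_le one_pos hs)).continuousWithinAt)
      (f' := elld)
      (fun s hs => by
        rw [interior_Ici] at hs
        exact (hasDerivAt_ell (lt_trans one_pos hs)).hasDerivWithinAt)
    intro s hs
    rw [interior_Ici] at hs
    exact elld_pos hs
  have := hmono (Set.self_mem_Ici) (Set.mem_Ici.mpr ht.le) ht
  rwa [ell_one] at this

lemma ell_pos_of_lt {t : ℝ} (ht0 : 0 < t) (ht : t < 1) : 0 < ell t := by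
  have hmono : StrictAntiOn ell (Set.Ioc 0 1) := by
    apply strictAntiOn_of_hasDerivWithinAt_neg (convex_Ioc 0 1)
      (fun s hs => (ell_cont hs.1).continuousWithinAt)
      (f' := elld)
      (fun s hs => by
        have : s ∈ Set.Ioo (0:ℝ) 1 := by
          rwa [interior_Ioc] at hs
        exact (hasDerivAt_ell this.1).hasDerivWithinAt)
    intro s hs
    rw [interior_Ioc] at hs
    exact elld_neg hs.1 hs.2
  have := hmono (Set.mem_Ioc.mpr ⟨ht0, ht.le⟩) (Set.mem_Ioc.mpr ⟨one_pos, le_refl 1⟩) ht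
  rwa [ell_one] at this

lemma ell_nonneg {t : ℝ} (ht : 0 < t) : 0 ≤ ell t := by
  rcases lt_trichotomy t 1 with h | h | h
  · exact (ell_pos_of_lt ht h).le
  · simp [h, ell_one]
  · exact (ell_pos_of_gt h).le

lemma hasDerivAt_elld {t : ℝ} (ht : 0 < t) :
    HasDerivAt elld (1/(t*(1+t))) t := by
  have hq : HasDerivAt (fun s : ℝ => 2*s/(1+s)) ((2*1*(1+t) - 2*t*1)/(1+t)^2) t := by
    exact ((hasDerivAt_id' (x := t)).const_mul 2).div ((hasDerivAt_id' (x := t)).const_add 1) (one_add_pos ht).ne'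
  have := hq.log (by positivity)
  refine this.congr_deriv ?_
  field_simp
  ring

noncomputable def Fkey (t : ℝ) : ℝ := 2 * ell t - t * (elld t)^2

lemma hasDerivAt_Fkey {t : ℝ} (ht : 0 < t) :
    HasDerivAt Fkey (elld t * (2 - elld t - 2/(1+t))) t := by
  have h1 : HasDerivAt (fun s => 2 * ell s) (2 * elld t) t :=
    (hasDerivAt_ell ht).const_mul 2
  have h2 : HasDerivAt (fun s => s * (elld s)^2)
      (1 * (elld t)^2 + t * ((2:ℕ) * elld t ^ 1 * (1/(t*(1+t))))) t :=
    (hasDerivAt_id t).mul ((hasDerivAt_elld ht).pow 2)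
  have := h1.sub h2
  refine this.congr_deriv ?_
  have h1t : (1:ℝ) + t ≠ 0 := (one_add_pos ht).ne'
  field_simp
  ring

lemma Fkey_one : Fkey 1 = 0 := by norm_num [Fkey, ell_one, elld]

lemma Fkey_factor_pos {t : ℝ} (ht : 0 < t) : 0 < 2 - elld t - 2/(1+t) := by
  have hx : (0:ℝ) < 2*t/(1+t) := by positivity
  have hlog := Real.log_le_sub_one_of_pos hx
  have : 2 - 2/(1+t) = 2*t/(1+t) := by field_simp; ring
  rw [elld]
  linarith

lemma Fkey_nonneg {t : ℝ} (ht : 0 < t) : 0 ≤ Fkey t := by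
  have hcont : ∀ s : ℝ, 0 < s → ContinuousAt Fkey s := fun s hs => (hasDerivAt_Fkey hs).continuousAt
  rcases le_or_gt 1 t with h | h
  · have hmono : MonotoneOn Fkey (Set.Ici 1) := by
      apply monotoneOn_of_hasDerivWithinAt_nonneg (convex_Ici 1)
        (fun s hs => (hcont s (lt_of_lt_of_le one_pos hs)).continuousWithinAt)
        (f' := fun s => elld s * (2 - elld s - 2/(1+s)))
        (fun s hs => by
          rw [interior_Ici] at hs
          exact (hasDerivAt_Fkey (lt_trans one_pos hs)).hasDerivWithinAt)
      intro s hs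
      rw [interior_Ici] at hs
      exact mul_nonneg (elld_nonneg hs.le) (Fkey_factor_pos (lt_trans one_pos hs)).le
    have := hmono Set.self_mem_Ici (Set.mem_Ici.mpr h) h
    rwa [Fkey_one] at this
  · have hanti : AntitoneOn Fkey (Set.Ioc 0 1) := by
      apply antitoneOn_of_hasDerivWithinAt_nonpos (convex_Ioc 0 1)
        (fun s hs => (hcont s hs.1).continuousWithinAt)
        (f' := fun s => elld s * (2 - elld s - 2/(1+s)))
        (fun s hs => by
          rw [interior_Ioc] at hs
          exact (hasDerivAt_Fkey hs.1).hasDerivWithinAt)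
      intro s hs
      rw [interior_Ioc] at hs
      exact mul_nonpos_of_nonpos_of_nonneg (elld_nonpos hs.1 hs.2.le) (Fkey_factor_pos hs.1).le
    have := hanti (Set.mem_Ioc.mpr ⟨ht, h.le⟩) (Set.mem_Ioc.mpr ⟨one_pos, le_refl 1⟩) h.le
    rwa [Fkey_one] at this

lemma elld_sq_le {t : ℝ} (ht : 0 < t) : t * (elld t)^2 ≤ 2 * ell t := by
  have := Fkey_nonneg ht
  rw [Fkey] at this
  linarith

lemma absG'_le {t : ℝ} (ht : 0 < t) :
    |elld t / (2 * Real.sqrt (ell t))| ≤ 1 / Real.sqrt (2*t) := by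
  rcases eq_or_lt_of_le (ell_nonneg ht) with h0 | hpos
  · rw [← h0]
    simp [Real.sqrt_nonneg, div_nonneg, le_div_iff₀, Real.sqrt_pos.mpr (by linarith : (0:ℝ) < 2*t)]
  · have hsl : Real.sqrt (ell t) > 0 := Real.sqrt_pos.mpr hpos
    have habs : |elld t| ≤ Real.sqrt (2 * ell t / t) := by
      have h1 : (elld t)^2 ≤ 2 * ell t / t := by
        rw [le_div_iff₀ ht]
        linarith [elld_sq_le ht]
      calc |elld t| = Real.sqrt ((elld t)^2) := (Real.sqrt_sq_eq_abs _).symm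
        _ ≤ Real.sqrt (2 * ell t / t) := Real.sqrt_le_sqrt h1
    rw [abs_div, abs_of_nonneg (by positivity : (0:ℝ) ≤ 2 * Real.sqrt (ell t))]
    have heq : Real.sqrt (2 * ell t / t) / (2 * Real.sqrt (ell t)) = 1 / Real.sqrt (2*t) := by
      rw [Real.sqrt_div' (2 * ell t) ht.le]
      · rw [Real.sqrt_mul (by norm_num) (ell t), Real.sqrt_mul (by norm_num) t]
        have h2 : Real.sqrt 2 * Real.sqrt 2 = 2 := Real.mul_self_sqrt (by norm_num)
        have ht' : Real.sqrt t > 0 := Real.sqrt_pos.mpr ht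
        have h2' : Real.sqrt 2 > 0 := Real.sqrt_pos.mpr (by norm_num)
        rw [div_div, div_eq_div_iff (by positivity) (by positivity)]
        linear_combination (Real.sqrt (ell t) * Real.sqrt t) * h2
    rw [← heq]
    exact div_le_div_of_nonneg_right habs (by positivity) |>.trans (le_refl _)

lemma mono_gen {c : ℝ} (hc : 0 < c) (hc1 : c ≤ 1) {ε : ℝ} (hε : |ε| ≤ 1) {D : Set ℝ}
    (hconv : Convex ℝ D) (hpos : ∀ s ∈ D, 0 < s)
    (hsub : ∀ s ∈ interior D, c ≤ s ∧ s ≠ 1) :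
    MonotoneOn (fun t => (1/Real.sqrt (2*c)) * t + ε * Real.sqrt (ell t)) D := by
  set K := 1/Real.sqrt (2*c) with hK
  apply monotoneOn_of_hasDerivWithinAt_nonneg hconv
    (f' := fun s => K + ε * (elld s / (2 * Real.sqrt (ell s))))
  · intro s hs
    have hs0 := hpos s hs
    have hsq : ContinuousAt (fun t => Real.sqrt (ell t)) s :=
      Real.continuous_sqrt.continuousAt.comp (ell_cont hs0)
    exact ((continuousAt_const.mul continuousAt_id).add
      (continuousAt_const.mul hsq)).continuousWithinAt
  · intro s hs
    have hs0 := hpos s (interior_subset hs)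
    obtain ⟨hcs, hs1⟩ := hsub s hs
    have hell : ell s ≠ 0 := (ne_of_gt (by
      rcases lt_or_gt_of_ne hs1 with h | h
      · exact ell_pos_of_lt hs0 h
      · exact ell_pos_of_gt h))
    have hd : HasDerivAt (fun t => K * t + ε * Real.sqrt (ell t))
        (K * 1 + ε * (elld s / (2 * Real.sqrt (ell s)))) s :=
      ((hasDerivAt_id s).const_mul K).add (((hasDerivAt_ell hs0).sqrt hell).const_mul ε)
    simpa using hd.hasDerivWithinAt
  · intro s hs
    have hs0 := hpos s (interior_subset hs)
    obtain ⟨hcs, _⟩ := hsub s hs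
    have h1 := absG'_le hs0
    have h2 : 1 / Real.sqrt (2*s) ≤ K := by
      rw [hK]
      apply div_le_div_of_nonneg_left one_pos.le (Real.sqrt_pos.mpr (by linarith))
      exact Real.sqrt_le_sqrt (by linarith)
    have h3 : |ε * (elld s / (2 * Real.sqrt (ell s)))| ≤ K := by
      rw [abs_mul]
      calc |ε| * |elld s / (2 * Real.sqrt (ell s))| ≤ 1 * (1 / Real.sqrt (2*s)) :=
            mul_le_mul hε h1 (abs_nonneg _) one_pos.le
        _ ≤ K := by rw [one_mul]; exact h2
    have := neg_abs_le (ε * (elld s / (2 * Real.sqrt (ell s))))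
    linarith

lemma sqrtEll_lip {c x y : ℝ} (hc : 0 < c) (hc1 : c ≤ 1) (hx : c ≤ x) (hy : c ≤ y) :
    |Real.sqrt (ell x) - Real.sqrt (ell y)| ≤ (1/Real.sqrt (2*c)) * |x - y| := by
  set K := 1/Real.sqrt (2*c) with hKdef
  have hKpos : 0 < K := by
    rw [hKdef]
    positivity
  have hmain : ∀ a b : ℝ, c ≤ a → c ≤ b → a ≤ b →
      |Real.sqrt (ell a) - Real.sqrt (ell b)| ≤ K * (b - a) := by
    intro a b ha hb hab
    have hmono1 : MonotoneOn (fun t => K * t + 1 * Real.sqrt (ell t)) (Set.Icc c 1) :=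
      mono_gen hc hc1 (by norm_num) (convex_Icc c 1) (fun s hs => lt_of_lt_of_le hc hs.1)
        (fun s hs => by rw [interior_Icc] at hs; exact ⟨hs.1.le, hs.2.ne⟩)
    have hmono2 : MonotoneOn (fun t => K * t + (-1) * Real.sqrt (ell t)) (Set.Icc c 1) :=
      mono_gen hc hc1 (by norm_num) (convex_Icc c 1) (fun s hs => lt_of_lt_of_le hc hs.1)
        (fun s hs => by rw [interior_Icc] at hs; exact ⟨hs.1.le, hs.2.ne⟩)
    have hmono3 : MonotoneOn (fun t => K * t + 1 * Real.sqrt (ell t)) (Set.Ici 1) :=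
      mono_gen hc hc1 (by norm_num) (convex_Ici 1) (fun s hs => lt_of_lt_of_le one_pos hs)
        (fun s hs => by rw [interior_Ici] at hs; exact ⟨le_trans hc1 hs.le, hs.ne'⟩)
    have hmono4 : MonotoneOn (fun t => K * t + (-1) * Real.sqrt (ell t)) (Set.Ici 1) :=
      mono_gen hc hc1 (by norm_num) (convex_Ici 1) (fun s hs => lt_of_lt_of_le one_pos hs)
        (fun s hs => by rw [interior_Ici] at hs; exact ⟨le_trans hc1 hs.le, hs.ne'⟩)
    have hG1 : Real.sqrt (ell 1) = 0 := by rw [ell_one, Real.sqrt_zero]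
    rw [abs_sub_le_iff]
    rcases le_or_gt b 1 with hb1 | hb1
    · have h1 := hmono1 ⟨ha, le_trans hab hb1⟩ ⟨hb, hb1⟩ hab
      have h2 := hmono2 ⟨ha, le_trans hab hb1⟩ ⟨hb, hb1⟩ hab
      simp only [one_mul, neg_one_mul, neg_mul] at h1 h2
      constructor <;> linarith
    · rcases le_or_gt 1 a with ha1 | ha1
      · have h1 := hmono3 (Set.mem_Ici.mpr ha1) (Set.mem_Ici.mpr (le_trans ha1 hab)) hab
        have h2 := hmono4 (Set.mem_Ici.mpr ha1) (Set.mem_Ici.mpr (le_trans ha1 hab)) hab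
        simp only [one_mul, neg_one_mul, neg_mul, Set.mem_Ici] at h1 h2
        constructor <;> linarith
      · -- a < 1 < b
        have hGa : Real.sqrt (ell a) ≤ K * (1 - a) := by
          have h2 := hmono1 ⟨ha, ha1.le⟩ ⟨hc1, le_refl 1⟩ ha1.le
          simp only [one_mul] at h2
          rw [hG1] at h2
          linarith
        have hGb : Real.sqrt (ell b) ≤ K * (b - 1) := by
          have h2 := hmono4 (Set.self_mem_Ici) (Set.mem_Ici.mpr hb1.le) hb1.le
          simp only [neg_one_mul] at h2
          rw [hG1] at h2
          linarith
        have hna : 0 ≤ Real.sqrt (ell a) := Real.sqrt_nonneg _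
        have hnb : 0 ≤ Real.sqrt (ell b) := Real.sqrt_nonneg _
        constructor <;> nlinarith
  rcases le_or_gt x y with h | h
  · rw [abs_of_nonpos (by linarith : x - y ≤ 0)]
    have := hmain x y hx hy h
    linarith [this]
  · rw [abs_of_nonneg (by linarith : 0 ≤ x - y), abs_sub_comm]
    have := hmain y x hy hx h.le
    linarith [this]


section TVfacts

variable {α : Type*} [MeasurableSpace α] (P Q : Measure α)
  [IsProbabilityMeasure P] [IsProbabilityMeasure Q]

lemma tv_bddAbove : BddAbove (Set.range
    (fun A : { A : Set α // MeasurableSet A } => |(P A).toReal - (Q A).toReal|)) := by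
  refine ⟨2, fun x hx => ?_⟩
  obtain ⟨A, rfl⟩ := hx
  have h1 : (P A).toReal ≤ 1 := by
    have := prob_le_one (μ := P) (s := A)
    simpa using ENNReal.toReal_le_of_le_ofReal one_pos.le (by simpa using this)
  have h2 : (Q A).toReal ≤ 1 := by
    have := prob_le_one (μ := Q) (s := A)
    simpa using ENNReal.toReal_le_of_le_ofReal one_pos.le (by simpa using this)
  have h3 : 0 ≤ (P A).toReal := ENNReal.toReal_nonneg
  have h4 : 0 ≤ (Q A).toReal := ENNReal.toReal_nonneg
  rw [abs_le]
  constructor <;> linarith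

lemma measure_diff_le_tv {A : Set α} (hA : MeasurableSet A) :
    |(P A).toReal - (Q A).toReal| ≤ TV P Q :=
  le_ciSup (tv_bddAbove P Q) (⟨A, hA⟩ : { A : Set α // MeasurableSet A })

lemma tv_nonneg : 0 ≤ TV P Q := by
  have := measure_diff_le_tv P Q MeasurableSet.empty
  simpa using this.trans (le_refl _) |>.trans' (by positivity)

lemma tv_symm : TV P Q = TV Q P := by
  unfold TV
  congr 1
  funext A
  rw [abs_sub_comm]

lemma integral_diff_le_tv (φ : α → ℝ) (hφ : Measurable φ) (m M : ℝ)
    (h1 : ∀ w, m ≤ φ w) (h2 : ∀ w, φ w ≤ M) (hmM : m ≤ M) :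
    ∫ w, φ w ∂P - ∫ w, φ w ∂Q ≤ (M - m) * TV P Q := by
  set ψ : α → ℝ := fun w => φ w - m with hψ
  have hψmeas : Measurable ψ := hφ.sub measurable_const
  have hψnn : ∀ w, 0 ≤ ψ w := fun w => by simp [hψ]; linarith [h1 w]
  have hψle : ∀ w, ψ w ≤ M - m := fun w => by simp [hψ]; linarith [h2 w]
  have hint : ∀ (R : Measure α) [IsProbabilityMeasure R], Integrable ψ R := by
    intro R _
    refine Integrable.mono' (integrable_const (M - m)) hψmeas.aestronglyMeasurable ?_
    filter_upwards with w
    rw [Real.norm_of_nonneg (hψnn w)]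
    exact hψle w
  have key : ∀ (R : Measure α) [IsProbabilityMeasure R],
      ∫ w, ψ w ∂ R = ∫ t in Set.Ioi (0:ℝ), ((R {a | t < ψ a}).toReal) := by
    intro R _
    exact (hint R).integral_eq_integral_meas_lt (Filter.Eventually.of_forall hψnn)
  -- reduce integrals of φ to integrals of ψ
  have hφint : ∀ (R : Measure α) [IsProbabilityMeasure R], Integrable φ R := by
    intro R _
    have := (hint R).add (integrable_const m)
    refine this.congr (Filter.Eventually.of_forall fun w => ?_)
    simp [hψ]
  have hsub : ∀ (R : Measure α) [IsProbabilityMeasure R],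
      ∫ w, ψ w ∂ R = ∫ w, φ w ∂ R - m := by
    intro R _
    rw [hψ]
    rw [integral_sub (hφint R) (integrable_const m), integral_const]
    simp
  -- layer functions
  set p : ℝ → ℝ := fun t => (P {a | t < ψ a}).toReal with hp
  set q : ℝ → ℝ := fun t => (Q {a | t < ψ a}).toReal with hq
  have hmono : ∀ (R : Measure α), Antitone (fun t => R {a | t < ψ a}) :=
    fun R _ _ hst => measure_mono (fun _ h => lt_of_le_of_lt hst h)
  have hpmeas : Measurable p := ((hmono P).measurable).ennreal_toReal
  have hqmeas : Measurable q := ((hmono Q).measurable).ennreal_toReal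
  have hzero : ∀ (R : Measure α) (t : ℝ), M - m < t → (R {a | t < ψ a}).toReal = 0 := by
    intro R t ht
    have : {a | t < ψ a} = ∅ := by
      ext a
      simp only [Set.mem_setOf_eq, Set.mem_empty_iff_false, iff_false, not_lt]
      exact (hψle a).trans ht.le
    rw [this]
    simp
  have hindint : Integrable ((Set.Ioc (0:ℝ) (M-m)).indicator (fun _ => (1:ℝ)))
      (volume.restrict (Set.Ioi (0:ℝ))) := by
    refine Integrable.restrict ?_
    refine (IntegrableOn.integrable_indicator ?_ measurableSet_Ioc)
    exact integrableOn_const (by rw [Real.volume_Ioc]; exact ENNReal.ofReal_ne_top)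
  have hbound : ∀ (R : Measure α) [IsProbabilityMeasure R] (t : ℝ),
      (R {a | t < ψ a}).toReal ≤ 1 := by
    intro R _ t
    have h := prob_le_one (μ := R) (s := {a | t < ψ a})
    calc (R {a | t < ψ a}).toReal ≤ (1:ℝ≥0∞).toReal := ENNReal.toReal_mono (by simp) h
      _ = 1 := by simp
  have hpint : IntegrableOn p (Set.Ioi (0:ℝ)) volume := by
    refine Integrable.mono' hindint hpmeas.aestronglyMeasurable ?_
    filter_upwards [ae_restrict_mem measurableSet_Ioi] with t ht
    rw [Real.norm_of_nonneg ENNReal.toReal_nonneg]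
    rcases le_or_gt t (M - m) with h | h
    · have : t ∈ Set.Ioc (0:ℝ) (M-m) := ⟨ht, h⟩
      rw [Set.indicator_of_mem this]
      exact hbound P t
    · rw [Set.indicator_of_notMem (by simp [Set.mem_Ioc]; intro _; linarith)]
      rw [hzero P t h]
  have hqint : IntegrableOn q (Set.Ioi (0:ℝ)) volume := by
    refine Integrable.mono' hindint hqmeas.aestronglyMeasurable ?_
    filter_upwards [ae_restrict_mem measurableSet_Ioi] with t ht
    rw [Real.norm_of_nonneg ENNReal.toReal_nonneg]
    rcases le_or_gt t (M - m) with h | h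
    · have : t ∈ Set.Ioc (0:ℝ) (M-m) := ⟨ht, h⟩
      rw [Set.indicator_of_mem this]
      exact hbound Q t
    · rw [Set.indicator_of_notMem (by simp [Set.mem_Ioc]; intro _; linarith)]
      rw [hzero Q t h]
  have hdiff : ∫ w, φ w ∂P - ∫ w, φ w ∂Q
      = ∫ t in Set.Ioi (0:ℝ), (p t - q t) := by
    rw [show ∫ w, φ w ∂P - ∫ w, φ w ∂Q = ∫ w, ψ w ∂P - ∫ w, ψ w ∂Q by
      rw [hsub P, hsub Q]; ring]
    rw [key P, key Q, ← integral_sub hpint hqint]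
  rw [hdiff]
  have hmeasset : ∀ t : ℝ, MeasurableSet {a | t < ψ a} := fun t =>
    measurableSet_lt measurable_const hψmeas
  have hptq : ∀ t ∈ Set.Ioi (0:ℝ), p t - q t
      ≤ (Set.Ioc (0:ℝ) (M-m)).indicator (fun _ => TV P Q) t := by
    intro t ht
    rcases le_or_gt t (M - m) with h | h
    · have hmem : t ∈ Set.Ioc (0:ℝ) (M-m) := Set.mem_Ioc.mpr ⟨ht, h⟩
      rw [Set.indicator_of_mem hmem]
      have hle := measure_diff_le_tv P Q (hmeasset t)
      have h2 := le_abs_self ((P {a | t < ψ a}).toReal - (Q {a | t < ψ a}).toReal)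
      exact h2.trans hle
    · rw [Set.indicator_of_notMem (by simp [Set.mem_Ioc]; intro _; linarith)]
      show (P {a | t < ψ a}).toReal - (Q {a | t < ψ a}).toReal ≤ 0
      rw [hzero P t h, hzero Q t h]
      simp
  have hTVind : Integrable ((Set.Ioc (0:ℝ) (M-m)).indicator (fun _ => TV P Q))
      (volume.restrict (Set.Ioi (0:ℝ))) := by
    refine Integrable.restrict ?_
    refine (IntegrableOn.integrable_indicator ?_ measurableSet_Ioc)
    exact integrableOn_const (by rw [Real.volume_Ioc]; exact ENNReal.ofReal_ne_top)
  calc ∫ t in Set.Ioi (0:ℝ), (p t - q t)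
      ≤ ∫ t in Set.Ioi (0:ℝ), (Set.Ioc (0:ℝ) (M-m)).indicator (fun _ => TV P Q) t := by
        refine integral_mono_ae (hpint.sub hqint) hTVind ?_
        filter_upwards [ae_restrict_mem measurableSet_Ioi] with t ht
        exact hptq t ht
    _ ≤ (M - m) * TV P Q := by
        rw [setIntegral_indicator measurableSet_Ioc]
        have hinter : Set.Ioi (0:ℝ) ∩ Set.Ioc (0:ℝ) (M-m) = Set.Ioc (0:ℝ) (M-m) :=
          Set.inter_eq_self_of_subset_right Set.Ioc_subset_Ioi_self
        rw [hinter, setIntegral_const, Real.volume_real_Ioc_of_le (by linarith)]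
        simp [mul_comm]

end TVfacts

lemma mid_le_hi {r hi : ℝ} (hr : 0 < r) (hhi : r ≤ hi) (h1 : 1 ≤ hi) : 2*r/(1+r) ≤ hi := by
  rw [div_le_iff₀ (by linarith)]
  nlinarith

lemma lo_le_mid {r lo : ℝ} (hr : 0 < r) (hlo : lo ≤ r) (hlo1 : lo ≤ 1) : lo ≤ 2*r/(1+r) := by
  rw [le_div_iff₀ (by linarith)]
  nlinarith

lemma abs_log_mid_le {r ξ : ℝ} (hξ : 0 ≤ ξ) (h1 : Real.exp (-ξ) ≤ r) (h2 : r ≤ Real.exp ξ) :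
    |Real.log (2*r/(1+r))| ≤ ξ := by
  have hr : 0 < r := lt_of_lt_of_le (Real.exp_pos _) h1
  have hmidpos : 0 < 2*r/(1+r) := by positivity
  have hup : 2*r/(1+r) ≤ Real.exp ξ := mid_le_hi hr h2 (Real.one_le_exp hξ)
  have hlo : Real.exp (-ξ) ≤ 2*r/(1+r) :=
    lo_le_mid hr h1 (Real.exp_le_one_iff.mpr (by linarith))
  rw [abs_le]
  constructor
  · exact (Real.le_log_iff_exp_le hmidpos).mpr hlo
  · rw [Real.log_le_iff_le_exp hmidpos]
    exact hup

lemma ratio_inv_bounds {r ξ : ℝ} (hξ : 0 ≤ ξ) (h1 : Real.exp (-ξ) ≤ r) (h2 : r ≤ Real.exp ξ) :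
    Real.exp (-ξ) ≤ 1/r ∧ 1/r ≤ Real.exp ξ := by
  have hr : 0 < r := lt_of_lt_of_le (Real.exp_pos _) h1
  constructor
  · rw [le_div_iff₀ hr]
    calc Real.exp (-ξ) * r ≤ Real.exp (-ξ) * Real.exp ξ :=
      mul_le_mul_of_nonneg_left h2 (Real.exp_pos _).le
    _ = 1 := by rw [← Real.exp_add]; simp
  · rw [div_le_iff₀ hr]
    calc (1:ℝ) = Real.exp (-ξ) * Real.exp ξ := by rw [← Real.exp_add]; simp
    _ ≤ Real.exp ξ * r := by
      rw [mul_comm (Real.exp (-ξ))]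
      exact mul_le_mul_of_nonneg_left h1 (Real.exp_pos _).le

lemma jsdiv_eq {α : Type*} [MeasurableSpace α] (μ : Measure α) (g b : α → ℝ)
    (hg : Measurable g) (hb : Measurable b) (hbpos : ∀ d, 0 < b d)
    (hbint : Integrable b μ) {ξ : ℝ} (hξ : 0 ≤ ξ)
    (hlo : ∀ d, Real.exp (-ξ) * b d ≤ g d) (hhi : ∀ d, g d ≤ Real.exp ξ * b d) :
    Integrable (fun d => b d * ell (g d / b d)) μ ∧
    JSdiv μ g b = (1/2) * ∫ d, b d * ell (g d / b d) ∂μ := by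
  have hgpos : ∀ d, 0 < g d := fun d =>
    lt_of_lt_of_le (by have := hbpos d; positivity) (hlo d)
  have hrlo : ∀ d, Real.exp (-ξ) ≤ g d / b d := fun d =>
    (le_div_iff₀ (hbpos d)).mpr (hlo d)
  have hrhi : ∀ d, g d / b d ≤ Real.exp ξ := fun d =>
    (div_le_iff₀ (hbpos d)).mpr (hhi d)
  set A : α → ℝ := fun d => g d * Real.log (g d / ((g d + b d)/2)) with hA
  set B : α → ℝ := fun d => b d * Real.log (b d / ((g d + b d)/2)) with hB
  have hbne : ∀ d, b d ≠ 0 := fun d => (hbpos d).ne'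
  have hgne : ∀ d, g d ≠ 0 := fun d => (hgpos d).ne'
  have hsumne : ∀ d, g d + b d ≠ 0 := fun d => by have := hbpos d; have := hgpos d; positivity
  have id1 : ∀ d, g d / ((g d + b d)/2) = 2*(g d / b d)/(1 + g d / b d) := by
    intro d
    have h1 := hbne d
    have hb' := hbpos d; have hg' := hgpos d
    rw [div_eq_div_iff (by positivity) (by positivity)]
    field_simp
    ring
  have id2 : ∀ d, b d / ((g d + b d)/2) = 2*(b d / g d)/(1 + b d / g d) := by
    intro d
    have h1 := hgne d
    have hb' := hbpos d; have hg' := hgpos d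
    rw [div_eq_div_iff (by positivity) (by positivity)]
    field_simp
  have id2' : ∀ d, 2/(1 + g d / b d) = 2*(b d / g d)/(1 + b d / g d) := by
    intro d
    have h1 := hbne d; have h2 := hgne d
    have hb' := hbpos d; have hg' := hgpos d
    rw [div_eq_div_iff (by positivity) (by positivity)]
    field_simp
    ring
  have hinv : ∀ d, Real.exp (-ξ) ≤ b d / g d ∧ b d / g d ≤ Real.exp ξ := by
    intro d
    have h := ratio_inv_bounds hξ (hrlo d) (hrhi d)
    have : 1/(g d / b d) = b d / g d := by
      rw [one_div_div]
    rw [this] at h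
    exact h
  have hAabs : ∀ d, |A d| ≤ ξ * Real.exp ξ * b d := by
    intro d
    rw [hA]
    simp only
    rw [id1 d, abs_mul, abs_of_nonneg (hgpos d).le]
    calc g d * |Real.log (2*(g d / b d)/(1 + g d / b d))|
        ≤ (Real.exp ξ * b d) * ξ :=
          mul_le_mul (hhi d) (abs_log_mid_le hξ (hrlo d) (hrhi d)) (abs_nonneg _)
            (by have := hbpos d; positivity)
      _ = ξ * Real.exp ξ * b d := by ring
  have hBabs : ∀ d, |B d| ≤ ξ * b d := by
    intro d
    rw [hB]
    simp only
    rw [id2 d, abs_mul, abs_of_nonneg (hbpos d).le]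
    calc b d * |Real.log (2*(b d / g d)/(1 + b d / g d))|
        ≤ b d * ξ := mul_le_mul_of_nonneg_left
            (abs_log_mid_le hξ (hinv d).1 (hinv d).2) (hbpos d).le
      _ = ξ * b d := by ring
  have hAmeas : Measurable A := by
    apply hg.mul
    exact Real.measurable_log.comp (hg.div ((hg.add hb).div_const 2))
  have hBmeas : Measurable B := by
    apply hb.mul
    exact Real.measurable_log.comp (hb.div ((hg.add hb).div_const 2))
  have hAint : Integrable A μ := by
    refine Integrable.mono' (hbint.const_mul (ξ * Real.exp ξ)) hAmeas.aestronglyMeasurable ?_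
    filter_upwards with d
    rw [Real.norm_eq_abs]
    exact hAabs d
  have hBint : Integrable B μ := by
    refine Integrable.mono' (hbint.const_mul ξ) hBmeas.aestronglyMeasurable ?_
    filter_upwards with d
    rw [Real.norm_eq_abs]
    exact hBabs d
  have id3 : ∀ d, A d + B d = b d * ell (g d / b d) := by
    intro d
    rw [hA, hB]
    simp only
    rw [ell, id1 d, id2 d, ← id2' d]
    have h1 := hbne d
    field_simp
  constructor
  · exact (hAint.add hBint).congr (Filter.Eventually.of_forall id3)
  · rw [JSdiv]
    rw [show (1:ℝ)/2 * ∫ d, A d ∂μ + 1/2 * ∫ d, B d ∂μ = 1/2 * (∫ d, A d ∂μ + ∫ d, B d ∂μ) by ring]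
    rw [← integral_add hAint hBint]
    congr 1
    exact integral_congr_ae (Filter.Eventually.of_forall id3)

lemma integral_mul_le_sqrt {α : Type*} [MeasurableSpace α] (μ : Measure α) (u v : α → ℝ)
    (hu : AEStronglyMeasurable u μ) (hv : AEStronglyMeasurable v μ)
    (hun : ∀ d, 0 ≤ u d) (hvn : ∀ d, 0 ≤ v d)
    (hu2 : Integrable (fun d => u d ^ 2) μ) (hv2 : Integrable (fun d => v d ^ 2) μ) :
    ∫ d, u d * v d ∂μ ≤ Real.sqrt (∫ d, u d ^ 2 ∂μ) * Real.sqrt (∫ d, v d ^ 2 ∂μ) := by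
  have hconj : (2:ℝ).HolderConjugate 2 := Real.holderConjugate_iff.mpr ⟨one_lt_two, by norm_num⟩
  have hmu : MemLp u (ENNReal.ofReal 2) μ := by
    rw [show ENNReal.ofReal 2 = 2 by simp]
    exact (memLp_two_iff_integrable_sq hu).mpr hu2
  have hmv : MemLp v (ENNReal.ofReal 2) μ := by
    rw [show ENNReal.ofReal 2 = 2 by simp]
    exact (memLp_two_iff_integrable_sq hv).mpr hv2
  have h := integral_mul_le_Lp_mul_Lq_of_nonneg hconj
    (Filter.Eventually.of_forall hun) (Filter.Eventually.of_forall hvn) hmu hmv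
  have hru : ∫ d, u d ^ (2:ℝ) ∂μ = ∫ d, u d ^ 2 ∂μ :=
    integral_congr_ae (Filter.Eventually.of_forall fun d => Real.rpow_two (u d))
  have hrv : ∫ d, v d ^ (2:ℝ) ∂μ = ∫ d, v d ^ 2 ∂μ :=
    integral_congr_ae (Filter.Eventually.of_forall fun d => Real.rpow_two (v d))
  rw [hru, hrv] at h
  rw [Real.sqrt_eq_rpow, Real.sqrt_eq_rpow]
  exact h

lemma const_ineq {ξ : ℝ} (hξ : 0 ≤ ξ) :
    Real.sqrt (1/2) * ((1/Real.sqrt (2*Real.exp (-ξ))) * (Real.exp ξ - Real.exp (-ξ)))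
      ≤ (1/2) * (Real.exp (2*ξ) - 1) := by
  set s := Real.exp (ξ/2) with hs
  have hs1 : 1 ≤ s := Real.one_le_exp (by linarith)
  have hspos : (0:ℝ) < s := lt_of_lt_of_le one_pos hs1
  have hexpξ : Real.exp ξ = s^2 := by
    rw [hs, ← Real.exp_nat_mul]
    congr 1
    push_cast
    ring
  have hexpneg : Real.exp (-ξ) = (s^2)⁻¹ := by
    rw [Real.exp_neg, hexpξ]
  have hexp2 : Real.exp (2*ξ) = s^4 := by
    rw [hs, ← Real.exp_nat_mul]
    congr 1
    push_cast
    ring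
  rw [hexpξ, hexpneg, hexp2]
  have h2 : Real.sqrt 2 * Real.sqrt 2 = 2 := Real.mul_self_sqrt (by norm_num)
  have hsqrt2pos : (0:ℝ) < Real.sqrt 2 := Real.sqrt_pos.mpr (by norm_num)
  have hhalf : Real.sqrt (1/2) = 1/Real.sqrt 2 := by
    rw [Real.sqrt_div' 1 (by norm_num)]
    · simp
  have hc : Real.sqrt (2*(s^2)⁻¹) = Real.sqrt 2 / s := by
    rw [Real.sqrt_mul (by norm_num), Real.sqrt_inv, Real.sqrt_sq hspos.le]
    rw [div_eq_mul_inv]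
  rw [hhalf, hc]
  have hkey : 1/Real.sqrt 2 * (1/(Real.sqrt 2 / s) * (s^2 - (s^2)⁻¹))
      = (s/2) * (s^2 - (s^2)⁻¹) := by
    rw [one_div_div, ← mul_assoc]
    have hmm : 1/Real.sqrt 2 * (s/Real.sqrt 2) = s/2 := by
      rw [div_mul_div_comm, one_mul, h2]
    rw [hmm]
  rw [hkey]
  have hinv : s * s⁻¹ = 1 := mul_inv_cancel₀ hspos.ne'
  have hinvpos : 0 < s⁻¹ := by positivity
  have hexp : (s^2)⁻¹ = s⁻¹ * s⁻¹ := by rw [sq, mul_inv]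
  rw [hexp]
  have hs3 : 1 ≤ s^3 := by nlinarith
  have ht := mul_le_mul_of_nonneg_left hs3 (by linarith : (0:ℝ) ≤ s - 1)
  have h1' : s - 1 ≤ s^4 - s^3 := by nlinarith [ht]
  have he : s⁻¹ * (s-1)^2 = s + s⁻¹ - 2 := by linear_combination (s - 2) * hinv
  have hAM : 2 ≤ s + s⁻¹ := by
    have h0 : 0 ≤ s⁻¹ * (s-1)^2 := by positivity
    rw [he] at h0
    linarith
  have hLHS : (s/2) * (s^2 - s⁻¹*s⁻¹) = s^3/2 - s⁻¹/2 := by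
    linear_combination (-(s⁻¹)/2) * hinv
  rw [hLHS]
  nlinarith [h1', hAM]

lemma measurable_ell : Measurable ell := by
  apply Measurable.add
  · exact measurable_id.mul (Real.measurable_log.comp
      ((measurable_const.mul measurable_id).div (measurable_const.add measurable_id)))
  · exact Real.measurable_log.comp (measurable_const.div (measurable_const.add measurable_id))

lemma perclient {Dk Wk : Type*} [MeasurableSpace Dk] [MeasurableSpace Wk]
    (μ : Measure Dk) (f : Dk → Wk → ℝ)
    (hf_meas : Measurable fun p : Dk × Wk => f p.1 p.2)
    (hf_pos : ∀ d w, 0 < f d w)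
    (b : Dk → ℝ) (hb_meas : Measurable b) (hb_pos : ∀ d, 0 < b d)
    (hb_dens : ∫ d, b d ∂μ = 1)
    (P Q : Measure Wk) [IsProbabilityMeasure P] [IsProbabilityMeasure Q]
    {ξ : ℝ} (hξ : 0 ≤ ξ) (hBP : ∀ d w, |Real.log (f d w / b d)| ≤ ξ) :
    Real.sqrt (JSdiv μ (fun d => ∫ w, f d w ∂P) b)
      ≤ Real.sqrt (JSdiv μ (fun d => ∫ w, f d w ∂Q) b)
        + (1/2) * (Real.exp (2*ξ) - 1) * TV P Q := by
  set g : Dk → ℝ := fun d => ∫ w, f d w ∂P with hgdef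
  set h : Dk → ℝ := fun d => ∫ w, f d w ∂Q with hhdef
  have hbint : Integrable b μ := by
    by_contra hc
    rw [integral_undef hc] at hb_dens
    norm_num at hb_dens
  -- pointwise bounds on f
  have hflo : ∀ d w, Real.exp (-ξ) * b d ≤ f d w := by
    intro d w
    have h1 : -ξ ≤ Real.log (f d w / b d) := neg_le_of_abs_le (hBP d w)
    have h2 : Real.exp (-ξ) ≤ f d w / b d :=
      (Real.le_log_iff_exp_le (by have := hf_pos d w; have := hb_pos d; positivity)).mp h1
    rw [le_div_iff₀ (hb_pos d)] at h2
    linarith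
  have hfhi : ∀ d w, f d w ≤ Real.exp ξ * b d := by
    intro d w
    have h1 : Real.log (f d w / b d) ≤ ξ := le_of_abs_le (hBP d w)
    have h2 : f d w / b d ≤ Real.exp ξ :=
      (Real.log_le_iff_le_exp (by have := hf_pos d w; have := hb_pos d; positivity)).mp h1
    rw [div_le_iff₀ (hb_pos d)] at h2
    linarith
  have hfd_meas : ∀ d, Measurable (f d) := fun d => hf_meas.comp measurable_prodMk_left
  have hfd_int : ∀ (d : Dk) (R : Measure Wk) [IsProbabilityMeasure R], Integrable (f d) R := by
    intro d R _
    refine Integrable.mono' (integrable_const (Real.exp ξ * b d))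
      (hfd_meas d).aestronglyMeasurable ?_
    filter_upwards with w
    rw [Real.norm_of_nonneg (hf_pos d w).le]
    exact hfhi d w
  have hbound : ∀ (d : Dk) (R : Measure Wk) [IsProbabilityMeasure R],
      Real.exp (-ξ) * b d ≤ ∫ w, f d w ∂ R ∧ (∫ w, f d w ∂ R) ≤ Real.exp ξ * b d := by
    intro d R _
    constructor
    · calc Real.exp (-ξ) * b d = ∫ _ : Wk, Real.exp (-ξ) * b d ∂ R := by
            rw [integral_const, probReal_univ]; simp
      _ ≤ ∫ w, f d w ∂ R := integral_mono (integrable_const _) (hfd_int d R) (hflo d)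
    · calc (∫ w, f d w ∂ R) ≤ ∫ _ : Wk, Real.exp ξ * b d ∂ R :=
            integral_mono (hfd_int d R) (integrable_const _) (hfhi d)
      _ = Real.exp ξ * b d := by rw [integral_const, probReal_univ]; simp
  have hglo : ∀ d, Real.exp (-ξ) * b d ≤ g d := fun d => (hbound d P).1
  have hghi : ∀ d, g d ≤ Real.exp ξ * b d := fun d => (hbound d P).2
  have hhlo : ∀ d, Real.exp (-ξ) * b d ≤ h d := fun d => (hbound d Q).1
  have hhhi : ∀ d, h d ≤ Real.exp ξ * b d := fun d => (hbound d Q).2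
  have hgpos : ∀ d, 0 < g d := fun d =>
    lt_of_lt_of_le (by have := hb_pos d; positivity) (hglo d)
  have hhpos : ∀ d, 0 < h d := fun d =>
    lt_of_lt_of_le (by have := hb_pos d; positivity) (hhlo d)
  have hg_meas : Measurable g := by
    have : StronglyMeasurable fun d => ∫ w, f d w ∂P :=
      (hf_meas.stronglyMeasurable).integral_prod_right'
    exact this.measurable
  have hh_meas : Measurable h := by
    have : StronglyMeasurable fun d => ∫ w, f d w ∂Q :=
      (hf_meas.stronglyMeasurable).integral_prod_right'
    exact this.measurable
  -- TV pointwise difference bound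
  have hdiffb : ∀ d, |g d - h d| ≤ (Real.exp ξ - Real.exp (-ξ)) * b d * TV P Q := by
    intro d
    have hMm : Real.exp (-ξ) * b d ≤ Real.exp ξ * b d := by
      apply mul_le_mul_of_nonneg_right _ (hb_pos d).le
      exact (Real.exp_le_exp.mpr (by linarith)).trans (le_refl _)
    have d1 := integral_diff_le_tv P Q (f d) (hfd_meas d) (Real.exp (-ξ) * b d)
      (Real.exp ξ * b d) (hflo d) (hfhi d) hMm
    have d2 := integral_diff_le_tv Q P (f d) (hfd_meas d) (Real.exp (-ξ) * b d)
      (Real.exp ξ * b d) (hflo d) (hfhi d) hMm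
    rw [tv_symm Q P] at d2
    have hC : (Real.exp ξ * b d - Real.exp (-ξ) * b d) * TV P Q
        = (Real.exp ξ - Real.exp (-ξ)) * b d * TV P Q := by ring
    rw [abs_sub_le_iff]
    constructor
    · rw [← hC]; exact d1
    · rw [← hC]; exact d2
  obtain ⟨Ig, Jg⟩ := jsdiv_eq μ g b hg_meas hb_meas hb_pos hbint hξ hglo hghi
  obtain ⟨Ih, Jh⟩ := jsdiv_eq μ h b hh_meas hb_meas hb_pos hbint hξ hhlo hhhi
  set c : ℝ := Real.exp (-ξ) with hcdef
  have hc0 : 0 < c := Real.exp_pos _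
  have hc1 : c ≤ 1 := Real.exp_le_one_iff.mpr (by linarith)
  set Kc : ℝ := 1/Real.sqrt (2*c) with hKcdef
  have hKc0 : 0 ≤ Kc := by rw [hKcdef]; positivity
  set ug : Dk → ℝ := fun d => Real.sqrt (b d * ell (g d / b d)) with hugdef
  set uh : Dk → ℝ := fun d => Real.sqrt (b d * ell (h d / b d)) with huhdef
  set v : Dk → ℝ := fun d => Kc * (|g d - h d| / Real.sqrt (b d)) with hvdef
  have hrg_lo : ∀ d, c ≤ g d / b d := fun d => (le_div_iff₀ (hb_pos d)).mpr (hglo d)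
  have hrh_lo : ∀ d, c ≤ h d / b d := fun d => (le_div_iff₀ (hb_pos d)).mpr (hhlo d)
  have hrg_pos : ∀ d, 0 < g d / b d := fun d => lt_of_lt_of_le hc0 (hrg_lo d)
  have hrh_pos : ∀ d, 0 < h d / b d := fun d => lt_of_lt_of_le hc0 (hrh_lo d)
  have hsb : ∀ d, Real.sqrt (b d) * Real.sqrt (b d) = b d :=
    fun d => Real.mul_self_sqrt (hb_pos d).le
  have hsbpos : ∀ d, 0 < Real.sqrt (b d) := fun d => Real.sqrt_pos.mpr (hb_pos d)
  -- pointwise triangle bound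
  have hpt : ∀ d, ug d ≤ uh d + v d := by
    intro d
    rw [hugdef, huhdef, hvdef]
    simp only
    rw [Real.sqrt_mul (hb_pos d).le, Real.sqrt_mul (hb_pos d).le]
    have lip := sqrtEll_lip hc0 hc1 (hrg_lo d) (hrh_lo d)
    have l1 : Real.sqrt (ell (g d / b d)) ≤ Real.sqrt (ell (h d / b d))
        + Kc * |g d / b d - h d / b d| := by
      have := le_of_abs_le lip
      rw [hKcdef]
      linarith
    have habs : |g d / b d - h d / b d| = |g d - h d| / b d := by
      rw [div_sub_div_same, abs_div, abs_of_pos (hb_pos d)]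
    have key : Real.sqrt (b d) * (|g d - h d| / b d) = |g d - h d| / Real.sqrt (b d) := by
      rw [eq_div_iff (hsbpos d).ne']
      rw [show Real.sqrt (b d) * (|g d - h d| / b d) * Real.sqrt (b d)
          = (|g d - h d| / b d) * (Real.sqrt (b d) * Real.sqrt (b d)) by ring]
      rw [hsb d, div_mul_cancel₀ _ (hb_pos d).ne']
    calc Real.sqrt (b d) * Real.sqrt (ell (g d / b d))
        ≤ Real.sqrt (b d) * (Real.sqrt (ell (h d / b d)) + Kc * |g d / b d - h d / b d|) :=
          mul_le_mul_of_nonneg_left l1 (Real.sqrt_nonneg _)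
      _ = Real.sqrt (b d) * Real.sqrt (ell (h d / b d))
            + Kc * (Real.sqrt (b d) * (|g d - h d| / b d)) := by rw [habs]; ring
      _ = Real.sqrt (b d) * Real.sqrt (ell (h d / b d))
            + Kc * (|g d - h d| / Real.sqrt (b d)) := by rw [key]
  -- bound on v
  set CC : ℝ := Kc * ((Real.exp ξ - c) * TV P Q) with hCCdef
  have hec : c ≤ Real.exp ξ := hc1.trans (Real.one_le_exp hξ)
  have htv0 : 0 ≤ TV P Q := tv_nonneg P Q
  have hCC0 : 0 ≤ CC := by
    rw [hCCdef]
    apply mul_nonneg hKc0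
    apply mul_nonneg (by linarith) htv0
  have hvb : ∀ d, v d ≤ CC * Real.sqrt (b d) := by
    intro d
    rw [hvdef, hCCdef]
    simp only
    have h1 : |g d - h d| / Real.sqrt (b d)
        ≤ (Real.exp ξ - c) * b d * TV P Q / Real.sqrt (b d) :=
      div_le_div_of_nonneg_right (hdiffb d) (hsbpos d).le
    have h2 : (Real.exp ξ - c) * b d * TV P Q / Real.sqrt (b d)
        = (Real.exp ξ - c) * TV P Q * Real.sqrt (b d) := by
      rw [show (Real.exp ξ - c) * b d * TV P Q / Real.sqrt (b d)
          = (Real.exp ξ - c) * TV P Q * (b d / Real.sqrt (b d)) by ring]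
      rw [Real.div_sqrt]
    calc Kc * (|g d - h d| / Real.sqrt (b d))
        ≤ Kc * ((Real.exp ξ - c) * b d * TV P Q / Real.sqrt (b d)) :=
          mul_le_mul_of_nonneg_left h1 hKc0
      _ = Kc * ((Real.exp ξ - c) * TV P Q) * Real.sqrt (b d) := by rw [h2]; ring
  -- nonnegativity
  have hug0 : ∀ d, 0 ≤ ug d := fun d => Real.sqrt_nonneg _
  have huh0 : ∀ d, 0 ≤ uh d := fun d => Real.sqrt_nonneg _
  have hv0 : ∀ d, 0 ≤ v d := fun d => by
    rw [hvdef]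
    have := hsbpos d
    positivity
  -- measurability
  have hsqrtb_meas : Measurable fun d => Real.sqrt (b d) :=
    Real.continuous_sqrt.measurable.comp hb_meas
  have hug_meas : Measurable ug :=
    Real.continuous_sqrt.measurable.comp (hb_meas.mul (measurable_ell.comp (hg_meas.div hb_meas)))
  have huh_meas : Measurable uh :=
    Real.continuous_sqrt.measurable.comp (hb_meas.mul (measurable_ell.comp (hh_meas.div hb_meas)))
  have hv_meas : Measurable v :=
    (((hg_meas.sub hh_meas).abs.div hsqrtb_meas)).const_mul Kc
  -- squared identities
  have hug_sq : ∀ d, ug d ^ 2 = b d * ell (g d / b d) := fun d =>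
    Real.sq_sqrt (mul_nonneg (hb_pos d).le (ell_nonneg (hrg_pos d)))
  have huh_sq : ∀ d, uh d ^ 2 = b d * ell (h d / b d) := fun d =>
    Real.sq_sqrt (mul_nonneg (hb_pos d).le (ell_nonneg (hrh_pos d)))
  -- integrability
  have Iug2 : Integrable (fun d => ug d ^ 2) μ :=
    Ig.congr (Filter.Eventually.of_forall fun d => (hug_sq d).symm)
  have Iuh2 : Integrable (fun d => uh d ^ 2) μ :=
    Ih.congr (Filter.Eventually.of_forall fun d => (huh_sq d).symm)
  have Iv2 : Integrable (fun d => v d ^ 2) μ := by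
    refine Integrable.mono' (hbint.const_mul (CC^2)) (hv_meas.pow_const 2).aestronglyMeasurable ?_
    filter_upwards with d
    rw [Real.norm_of_nonneg (by positivity)]
    calc v d ^ 2 ≤ (CC * Real.sqrt (b d))^2 := by
          apply pow_le_pow_left₀ (hv0 d) (hvb d)
      _ = CC^2 * b d := by rw [mul_pow, Real.sq_sqrt (hb_pos d).le]
  have Iuhv : Integrable (fun d => uh d * v d) μ := by
    refine Integrable.mono' ((Iuh2.add Iv2).const_mul (1/2))
      (huh_meas.mul hv_meas).aestronglyMeasurable ?_
    filter_upwards with d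
    rw [Real.norm_of_nonneg (mul_nonneg (huh0 d) (hv0 d))]
    simp only [Pi.add_apply]
    nlinarith [sq_nonneg (uh d - v d)]
  have I2uv : Integrable (fun d => 2 * (uh d * v d)) μ := Iuhv.const_mul 2
  have I23 : Integrable (fun d => 2 * (uh d * v d) + v d ^ 2) μ := I2uv.add Iv2
  have Iuv2 : Integrable (fun d => (uh d + v d) ^ 2) μ := by
    have : Integrable (fun d => uh d ^ 2 + (2 * (uh d * v d) + v d ^ 2)) μ := Iuh2.add I23
    exact this.congr (Filter.Eventually.of_forall fun d => by ring)
  -- norms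
  set A : ℝ := ∫ d, uh d ^ 2 ∂μ with hAdef
  set B : ℝ := ∫ d, v d ^ 2 ∂μ with hBdef
  have hA0 : 0 ≤ A := integral_nonneg fun d => by positivity
  have hB0 : 0 ≤ B := integral_nonneg fun d => by positivity
  have step2 : ∫ d, ug d ^ 2 ∂μ ≤ ∫ d, (uh d + v d) ^ 2 ∂μ := by
    apply integral_mono Iug2 Iuv2
    intro d
    exact pow_le_pow_left₀ (hug0 d) (hpt d) 2
  have step3 : ∫ d, (uh d + v d) ^ 2 ∂μ = A + (2 * ∫ d, uh d * v d ∂μ + B) := by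
    rw [hAdef, hBdef]
    rw [show (fun d => (uh d + v d)^2) = fun d => uh d ^2 + (2 * (uh d * v d) + v d ^2) by
      funext d; ring]
    rw [integral_add Iuh2 I23, integral_add I2uv Iv2]
    congr 1
    · congr 1
      rw [show (fun d => 2 * (uh d * v d)) = fun d => (2:ℝ) • (uh d * v d) by
        funext d; simp [smul_eq_mul]]
      rw [integral_smul]
      simp [smul_eq_mul]
  have step4 : ∫ d, uh d * v d ∂μ ≤ Real.sqrt A * Real.sqrt B :=
    integral_mul_le_sqrt μ uh v huh_meas.aestronglyMeasurable hv_meas.aestronglyMeasurable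
      huh0 hv0 Iuh2 Iv2
  have step5 : ∫ d, (uh d + v d) ^ 2 ∂μ ≤ (Real.sqrt A + Real.sqrt B)^2 := by
    have hexp : (Real.sqrt A + Real.sqrt B)^2 = A + 2*(Real.sqrt A * Real.sqrt B) + B := by
      rw [add_sq, Real.sq_sqrt hA0, Real.sq_sqrt hB0]
      ring
    rw [step3, hexp]
    linarith
  -- JS rewrites
  have hJg2 : JSdiv μ g b = (1/2) * ∫ d, ug d ^ 2 ∂μ := by
    rw [Jg]
    congr 1
    exact integral_congr_ae (Filter.Eventually.of_forall fun d => (hug_sq d).symm)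
  have hJh2 : JSdiv μ h b = (1/2) * A := by
    rw [Jh, hAdef]
    congr 1
    exact integral_congr_ae (Filter.Eventually.of_forall fun d => (huh_sq d).symm)
  -- B bound
  have hBle : B ≤ CC^2 := by
    rw [hBdef]
    calc ∫ d, v d ^ 2 ∂μ ≤ ∫ d, CC^2 * b d ∂μ := by
          apply integral_mono Iv2 (hbint.const_mul (CC^2))
          intro d
          calc v d ^ 2 ≤ (CC * Real.sqrt (b d))^2 := pow_le_pow_left₀ (hv0 d) (hvb d) 2
            _ = CC^2 * b d := by rw [mul_pow, Real.sq_sqrt (hb_pos d).le]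
      _ = CC^2 := by
          rw [show (fun d => CC^2 * b d) = fun d => (CC^2) • (b d) by
            funext d; simp [smul_eq_mul]]
          rw [integral_smul, hb_dens]
          simp
  have hsqrtB : Real.sqrt B ≤ CC := by
    calc Real.sqrt B ≤ Real.sqrt (CC^2) := Real.sqrt_le_sqrt hBle
      _ = CC := Real.sqrt_sq hCC0
  -- final chain
  have main1 : Real.sqrt (JSdiv μ g b)
      ≤ Real.sqrt (1/2) * (Real.sqrt A + Real.sqrt B) := by
    rw [hJg2]
    calc Real.sqrt ((1/2) * ∫ d, ug d ^ 2 ∂μ)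
        ≤ Real.sqrt ((1/2) * (Real.sqrt A + Real.sqrt B)^2) := by
          apply Real.sqrt_le_sqrt
          apply mul_le_mul_of_nonneg_left _ (by norm_num)
          exact step2.trans step5
      _ = Real.sqrt (1/2) * (Real.sqrt A + Real.sqrt B) := by
          rw [Real.sqrt_mul (by norm_num), Real.sqrt_sq (by positivity)]
  have main2 : Real.sqrt (1/2) * Real.sqrt A = Real.sqrt (JSdiv μ h b) := by
    rw [hJh2, Real.sqrt_mul (by norm_num)]
  have main3 : Real.sqrt (1/2) * Real.sqrt B ≤ (1/2) * (Real.exp (2*ξ) - 1) * TV P Q := by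
    have h1 : Real.sqrt (1/2) * Real.sqrt B ≤ Real.sqrt (1/2) * CC :=
      mul_le_mul_of_nonneg_left hsqrtB (Real.sqrt_nonneg _)
    have hci := const_ineq hξ
    rw [← hcdef] at hci
    have h3 := mul_le_mul_of_nonneg_right hci htv0
    have h2 : Real.sqrt (1/2) * CC
        = (Real.sqrt (1/2) * ((1/Real.sqrt (2*c)) * (Real.exp ξ - c))) * TV P Q := by
      rw [hCCdef, hKcdef]
      ring
    calc Real.sqrt (1/2) * Real.sqrt B ≤ Real.sqrt (1/2) * CC := h1
      _ = (Real.sqrt (1/2) * ((1/Real.sqrt (2*c)) * (Real.exp ξ - c))) * TV P Q := h2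
      _ ≤ ((1/2) * (Real.exp (2*ξ) - 1)) * TV P Q := h3
      _ = (1/2) * (Real.exp (2*ξ) - 1) * TV P Q := by ring
  calc Real.sqrt (JSdiv μ g b)
      ≤ Real.sqrt (1/2) * (Real.sqrt A + Real.sqrt B) := main1
    _ = Real.sqrt (1/2) * Real.sqrt A + Real.sqrt (1/2) * Real.sqrt B := by ring
    _ ≤ Real.sqrt (JSdiv μ h b) + (1/2) * (Real.exp (2*ξ) - 1) * TV P Q := by
        rw [main2]
        linarith [main3]

/-- For every client `k`, `(1/K)·Σ_k √JS(f^O_k ‖ f_{B,k}) ≤ ε_p +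
(1/K)·Σ_k (1/2)·(e^{2ξ} − 1)·TV(P^O_k ‖ P^S_k)`, where
`ε_p = (1/K)·Σ_k √JS(f^A_k ‖ f_{B,k})` is the Bayesian privacy leakage. -/
theorem avg_sqrt_js_le_privacy_leakage_add_tv
    (K : ℕ) (hK : 0 < K)
    (D : Fin K → Type*) [∀ k, MeasurableSpace (D k)]
    (μd : ∀ k, Measure (D k)) [∀ k, SigmaFinite (μd k)]
    (W : Fin K → Type*) [∀ k, MeasurableSpace (W k)]
    (f : ∀ k, D k → W k → ℝ)
    (hf_meas : ∀ k, Measurable fun p : D k × W k => f k p.1 p.2)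
    (hf_pos : ∀ k d w, 0 < f k d w)
    (hf_dens : ∀ k w, ∫ d, f k d w ∂(μd k) = 1)
    (fB : ∀ k, D k → ℝ)
    (hfB_meas : ∀ k, Measurable (fB k))
    (hfB_pos : ∀ k d, 0 < fB k d)
    (hfB_dens : ∀ k, ∫ d, fB k d ∂(μd k) = 1)
    (PO PS : ∀ k, Measure (W k))
    [∀ k, IsProbabilityMeasure (PO k)] [∀ k, IsProbabilityMeasure (PS k)]
    (ξ : ℝ) (hξ : 0 ≤ ξ)
    (hBP : ∀ k d w, |Real.log (f k d w / fB k d)| ≤ ξ) :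
    (1 / (K : ℝ)) * ∑ k, Real.sqrt (JSdiv (μd k) (fun d => ∫ w, f k d w ∂(PO k)) (fB k))
      ≤ (1 / (K : ℝ)) * ∑ k, Real.sqrt (JSdiv (μd k) (fun d => ∫ w, f k d w ∂(PS k)) (fB k))
        + (1 / (K : ℝ)) * ∑ k, (1 / 2) * (Real.exp (2 * ξ) - 1) * TV (PO k) (PS k) := by
  have hper : ∀ k : Fin K,
      Real.sqrt (JSdiv (μd k) (fun d => ∫ w, f k d w ∂(PO k)) (fB k))
        ≤ Real.sqrt (JSdiv (μd k) (fun d => ∫ w, f k d w ∂(PS k)) (fB k))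
          + (1/2) * (Real.exp (2*ξ) - 1) * TV (PO k) (PS k) := by
    intro k
    exact perclient (μd k) (f k) (hf_meas k) (hf_pos k) (fB k) (hfB_meas k) (hfB_pos k)
      (hfB_dens k) (PO k) (PS k) hξ (hBP k)
  have hKnn : (0:ℝ) ≤ 1 / (K : ℝ) := by positivity
  calc (1 / (K : ℝ)) * ∑ k, Real.sqrt (JSdiv (μd k) (fun d => ∫ w, f k d w ∂(PO k)) (fB k))
      ≤ (1 / (K : ℝ)) * ∑ k, (Real.sqrt (JSdiv (μd k) (fun d => ∫ w, f k d w ∂(PS k)) (fB k))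
          + (1/2) * (Real.exp (2*ξ) - 1) * TV (PO k) (PS k)) :=
        mul_le_mul_of_nonneg_left (Finset.sum_le_sum fun k _ => hper k) hKnn
    _ = (1 / (K : ℝ)) * ∑ k, Real.sqrt (JSdiv (μd k) (fun d => ∫ w, f k d w ∂(PS k)) (fB k))
        + (1 / (K : ℝ)) * ∑ k, (1 / 2) * (Real.exp (2 * ξ) - 1) * TV (PO k) (PS k) := by
        rw [Finset.sum_add_distrib, mul_add]
end

section
/- The Jensen–Shannon divergence between the attacked posterior mixture and the original posterior mixture is bounded by the squared total variation distance between the protected and unprotected parameter distributions: JS(f^A ‖ f^O) ≤ (1/4)·(e^{2ξ} − 1)^2 · TV(P^O ‖ P^S)^2. -/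
open MeasureTheory

section Aux
variable {W : Type*} [MeasurableSpace W]

lemma TV_bddAbove (P Q : Measure W) [IsFiniteMeasure P] [IsFiniteMeasure Q] :
    BddAbove (Set.range fun A : {A : Set W // MeasurableSet A} =>
      |(P A.1).toReal - (Q A.1).toReal|) := by
  refine ⟨(P Set.univ).toReal + (Q Set.univ).toReal, ?_⟩
  rintro x ⟨A, rfl⟩
  have h1 : (P A.1).toReal ≤ (P Set.univ).toReal :=
    ENNReal.toReal_mono (measure_ne_top _ _) (measure_mono (Set.subset_univ _))
  have h2 : (Q A.1).toReal ≤ (Q Set.univ).toReal :=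
    ENNReal.toReal_mono (measure_ne_top _ _) (measure_mono (Set.subset_univ _))
  have h3 : (0:ℝ) ≤ (P A.1).toReal := ENNReal.toReal_nonneg
  have h4 : (0:ℝ) ≤ (Q A.1).toReal := ENNReal.toReal_nonneg
  rw [abs_le]; constructor <;> linarith

lemma abs_measure_sub_le_TV (P Q : Measure W) [IsFiniteMeasure P] [IsFiniteMeasure Q]
    {A : Set W} (hA : MeasurableSet A) :
    |(P A).toReal - (Q A).toReal| ≤ TV P Q :=
  le_ciSup (TV_bddAbove P Q) (⟨A, hA⟩ : {A : Set W // MeasurableSet A})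

lemma TV_nonneg (P Q : Measure W) [IsFiniteMeasure P] [IsFiniteMeasure Q] : 0 ≤ TV P Q := by
  have := abs_measure_sub_le_TV P Q MeasurableSet.empty
  simpa using this

lemma TV_comm (P Q : Measure W) : TV P Q = TV Q P := by
  unfold TV
  congr 1
  funext A
  exact abs_sub_comm _ _

lemma integral_sub_le_TV (P Q : Measure W) [IsProbabilityMeasure P] [IsProbabilityMeasure Q]
    {h : W → ℝ} (hm : Measurable h) {a b : ℝ} (hab : a ≤ b)
    (h1 : ∀ w, a ≤ h w) (h2 : ∀ w, h w ≤ b) :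
    (∫ w, h w ∂P) - ∫ w, h w ∂Q ≤ (b - a) * TV P Q := by
  set ν : Measure W := P + Q with hν
  have hPν : P ≪ ν := by
    rw [hν]; exact Measure.absolutelyContinuous_of_le (Measure.le_add_right le_rfl)
  have hQν : Q ≪ ν := by
    rw [hν]; exact Measure.absolutelyContinuous_of_le (Measure.le_add_left le_rfl)
  set p : W → ℝ := fun w => (P.rnDeriv ν w).toReal with hpdef
  set q : W → ℝ := fun w => (Q.rnDeriv ν w).toReal with hqdef
  have hpm : Measurable p := (Measure.measurable_rnDeriv P ν).ennreal_toReal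
  have hqm : Measurable q := (Measure.measurable_rnDeriv Q ν).ennreal_toReal
  have hpi : Integrable p ν := Measure.integrable_toReal_rnDeriv
  have hqi : Integrable q ν := Measure.integrable_toReal_rnDeriv
  -- boundedness of h - a
  have hbd : ∃ C, ∀ w, ‖h w - a‖ ≤ C := by
    refine ⟨b - a, fun w => ?_⟩
    rw [Real.norm_eq_abs, abs_le]
    exact ⟨by linarith [h1 w, h2 w], by linarith [h2 w]⟩
  have hham : Measurable fun w => h w - a := hm.sub measurable_const
  -- integrability of h wrt probability measures
  have hhint : ∀ (R : Measure W), IsProbabilityMeasure R → Integrable h R := by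
    intro R hR
    refine (integrable_const (max |a| |b|)).mono' hm.aestronglyMeasurable (ae_of_all _ fun w => ?_)
    rw [Real.norm_eq_abs, abs_le]
    constructor
    · calc -(max |a| |b|) ≤ -|a| := by simp [le_max_left]
        _ ≤ a := neg_abs_le a
        _ ≤ h w := h1 w
    · exact (h2 w).trans ((le_abs_self b).trans (le_max_right _ _))
  -- key integral identities
  have eP : ∫ w, (h w - a) * p w ∂ν = (∫ w, h w ∂P) - a := by
    have hkey := integral_rnDeriv_smul (μ := P) (ν := ν) hPν (f := fun w => h w - a)
    simp only [smul_eq_mul] at hkey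
    rw [show (fun w => (h w - a) * p w) = fun w => (P.rnDeriv ν w).toReal * (h w - a) by
      funext w; rw [mul_comm], hkey, integral_sub (hhint P ‹_›) (integrable_const a)]
    simp
  have eQ : ∫ w, (h w - a) * q w ∂ν = (∫ w, h w ∂Q) - a := by
    have hkey := integral_rnDeriv_smul (μ := Q) (ν := ν) hQν (f := fun w => h w - a)
    simp only [smul_eq_mul] at hkey
    rw [show (fun w => (h w - a) * q w) = fun w => (Q.rnDeriv ν w).toReal * (h w - a) by
      funext w; rw [mul_comm], hkey, integral_sub (hhint Q ‹_›) (integrable_const a)]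
    simp
  have hip : Integrable (fun w => (h w - a) * p w) ν :=
    hpi.bdd_mul hham.aestronglyMeasurable (ae_of_all _ hbd.choose_spec)
  have hiq : Integrable (fun w => (h w - a) * q w) ν :=
    hqi.bdd_mul hham.aestronglyMeasurable (ae_of_all _ hbd.choose_spec)
  have hiφ : Integrable (fun w => (h w - a) * (p w - q w)) ν := by
    have : (fun w => (h w - a) * (p w - q w))
        = fun w => (h w - a) * p w - (h w - a) * q w := by funext w; ring
    rw [this]; exact hip.sub hiq
  have ediff : ∫ w, (h w - a) * (p w - q w) ∂ν = (∫ w, h w ∂P) - ∫ w, h w ∂Q := by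
    have heq : (fun w => (h w - a) * (p w - q w))
        = fun w => (h w - a) * p w - (h w - a) * q w := by funext w; ring
    rw [heq, integral_sub hip hiq, eP, eQ]; ring
  -- the Hahn-type set
  set A : Set W := {w | q w ≤ p w} with hAdef
  have hA : MeasurableSet A := measurableSet_le hqm hpm
  have hdiffint : Integrable (fun w => p w - q w) ν := hpi.sub hqi
  have hindint : Integrable (A.indicator fun w => (b - a) * (p w - q w)) ν :=
    (hdiffint.const_mul (b - a)).indicator hA
  have hptle : ∀ w, (h w - a) * (p w - q w)
      ≤ A.indicator (fun w => (b - a) * (p w - q w)) w := by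
    intro w
    by_cases hw : w ∈ A
    · rw [Set.indicator_of_mem hw]
      have hpq : 0 ≤ p w - q w := by
        have : q w ≤ p w := hw
        linarith
      exact mul_le_mul_of_nonneg_right (by linarith [h2 w]) hpq
    · rw [Set.indicator_of_notMem hw]
      have hpq : p w - q w ≤ 0 := by
        have : ¬ q w ≤ p w := hw
        linarith [lt_of_not_ge this]
      exact mul_nonpos_of_nonneg_of_nonpos (by linarith [h1 w]) hpq
  -- evaluate the indicator integral
  have eind : ∫ w, A.indicator (fun w => (b - a) * (p w - q w)) w ∂ν
      = (b - a) * ((P A).toReal - (Q A).toReal) := by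
    rw [integral_indicator hA]
    rw [integral_const_mul]
    rw [integral_sub (hpi.restrict) (hqi.restrict)]
    rw [Measure.setIntegral_toReal_rnDeriv hPν A, Measure.setIntegral_toReal_rnDeriv hQν A]
    rfl
  calc (∫ w, h w ∂P) - ∫ w, h w ∂Q
      = ∫ w, (h w - a) * (p w - q w) ∂ν := ediff.symm
    _ ≤ ∫ w, A.indicator (fun w => (b - a) * (p w - q w)) w ∂ν :=
        integral_mono hiφ hindint hptle
    _ = (b - a) * ((P A).toReal - (Q A).toReal) := eind
    _ ≤ (b - a) * TV P Q := by
        refine mul_le_mul_of_nonneg_left ?_ (by linarith)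
        exact (le_abs_self _).trans (abs_measure_sub_le_TV P Q hA)

lemma abs_integral_sub_le_TV (P Q : Measure W) [IsProbabilityMeasure P] [IsProbabilityMeasure Q]
    {h : W → ℝ} (hm : Measurable h) {a b : ℝ} (hab : a ≤ b)
    (h1 : ∀ w, a ≤ h w) (h2 : ∀ w, h w ≤ b) :
    |(∫ w, h w ∂P) - ∫ w, h w ∂Q| ≤ (b - a) * TV P Q := by
  rw [abs_sub_le_iff]
  refine ⟨integral_sub_le_TV P Q hm hab h1 h2, ?_⟩
  have := integral_sub_le_TV Q P hm hab h1 h2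
  rwa [TV_comm Q P] at this

end Aux

section PointwiseAux

lemma js_pointwise_nonneg {p q : ℝ} (hp : 0 < p) (hq : 0 < q) :
    0 ≤ p * Real.log (p / ((p + q) / 2)) + q * Real.log (q / ((p + q) / 2)) := by
  have hm : 0 < (p + q) / 2 := by linarith
  have h1 := Real.one_sub_inv_le_log_of_pos (div_pos hp hm)
  have h2 := Real.one_sub_inv_le_log_of_pos (div_pos hq hm)
  have e1 : p * (1 - (p / ((p + q) / 2))⁻¹) = p - (p + q) / 2 := by
    rw [inv_div]; field_simp
  have e2 : q * (1 - (q / ((p + q) / 2))⁻¹) = q - (p + q) / 2 := by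
    rw [inv_div]; field_simp
  have b1 : p * (1 - (p / ((p + q) / 2))⁻¹) ≤ p * Real.log (p / ((p + q) / 2)) :=
    mul_le_mul_of_nonneg_left h1 hp.le
  have b2 : q * (1 - (q / ((p + q) / 2))⁻¹) ≤ q * Real.log (q / ((p + q) / 2)) :=
    mul_le_mul_of_nonneg_left h2 hq.le
  rw [e1] at b1; rw [e2] at b2
  linarith

lemma js_pointwise_le {p q : ℝ} (hp : 0 < p) (hq : 0 < q) :
    p * Real.log (p / ((p + q) / 2)) + q * Real.log (q / ((p + q) / 2))
      ≤ (p - q) ^ 2 / (p + q) := by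
  have hm : 0 < (p + q) / 2 := by linarith
  have h1 := Real.log_le_sub_one_of_pos (div_pos hp hm)
  have h2 := Real.log_le_sub_one_of_pos (div_pos hq hm)
  have b1 : p * Real.log (p / ((p + q) / 2)) ≤ p * (p / ((p + q) / 2) - 1) :=
    mul_le_mul_of_nonneg_left h1 hp.le
  have b2 : q * Real.log (q / ((p + q) / 2)) ≤ q * (q / ((p + q) / 2) - 1) :=
    mul_le_mul_of_nonneg_left h2 hq.le
  have e : p * (p / ((p + q) / 2) - 1) + q * (q / ((p + q) / 2) - 1)
      = (p - q) ^ 2 / (p + q) := by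
    field_simp
    ring
  linarith

lemma abs_log_ratio_le {x m L : ℝ} (ξ : ℝ) (hξ : 0 ≤ ξ) (hL : 0 < L)
    (hxl : L ≤ x) (hxu : x ≤ L * Real.exp (2 * ξ))
    (hml : L ≤ m) (hmu : m ≤ L * Real.exp (2 * ξ)) :
    |Real.log (x / m)| ≤ 2 * ξ := by
  have hm : 0 < m := hL.trans_le hml
  have hx : 0 < x := hL.trans_le hxl
  have he : Real.exp (-(2 * ξ)) * Real.exp (2 * ξ) = 1 := by
    rw [← Real.exp_add]; simp
  have hepos := Real.exp_pos (2 * ξ)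
  have henegpos := Real.exp_pos (-(2 * ξ))
  rw [abs_le]
  constructor
  · rw [neg_le, ← Real.log_inv, inv_div]
    rw [Real.log_le_iff_le_exp (div_pos hm hx)]
    rw [div_le_iff₀ hx]
    nlinarith
  · rw [Real.log_le_iff_le_exp (div_pos hx hm)]
    rw [div_le_iff₀ hm]
    nlinarith

end PointwiseAux

/-- The Jensen–Shannon divergence between the attacked posterior mixture `f^A` and the
original posterior mixture `f^O` is bounded by the squared total variation distance between
the protected and unprotected parameter distributions:
`JS(f^A ‖ f^O) ≤ (1/4)·(e^{2ξ} − 1)² · TV(P^O ‖ P^S)²`. -/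
theorem js_attacked_original_le_tv_sq
    {D W : Type*} [MeasurableSpace D] [MeasurableSpace W]
    (μ : Measure D) [SigmaFinite μ]
    (f : D → W → ℝ)
    (hf_meas : Measurable fun p : D × W => f p.1 p.2)
    (hf_pos : ∀ d w, 0 < f d w)
    (hf_dens : ∀ w, ∫ d, f d w ∂μ = 1)
    (fB : D → ℝ)
    (hfB_meas : Measurable fB)
    (hfB_pos : ∀ d, 0 < fB d)
    (hfB_dens : ∫ d, fB d ∂μ = 1)
    (PO PS : Measure W) [IsProbabilityMeasure PO] [IsProbabilityMeasure PS]
    (ξ : ℝ) (hξ : 0 ≤ ξ)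
    (hBP : ∀ d w, |Real.log (f d w / fB d)| ≤ ξ) :
    JSdiv μ (fun d => ∫ w, f d w ∂PS) (fun d => ∫ w, f d w ∂PO)
      ≤ (1 / 4) * (Real.exp (2 * ξ) - 1) ^ 2 * (TV PO PS) ^ 2 := by
  classical
  set T : ℝ := TV PO PS with hT
  have hT0 : 0 ≤ T := TV_nonneg PO PS
  have hEξ : (1:ℝ) ≤ Real.exp ξ := Real.one_le_exp hξ
  have hEneg_le_one : Real.exp (-ξ) ≤ 1 := by
    rw [← Real.exp_zero]; exact Real.exp_le_exp.mpr (by linarith)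
  -- pointwise bounds on the kernel
  have hfb : ∀ d w, fB d * Real.exp (-ξ) ≤ f d w ∧ f d w ≤ fB d * Real.exp ξ := by
    intro d w
    have hpos : 0 < f d w / fB d := div_pos (hf_pos d w) (hfB_pos d)
    have habs := abs_le.mp (hBP d w)
    constructor
    · have h := Real.exp_le_exp.mpr habs.1
      rw [Real.exp_log hpos] at h
      rw [le_div_iff₀ (hfB_pos d)] at h
      linarith
    · have h := Real.exp_le_exp.mpr habs.2
      rw [Real.exp_log hpos] at h
      rw [div_le_iff₀ (hfB_pos d)] at h
      linarith
  set s : ℝ := Real.exp ξ - Real.exp (-ξ) with hs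
  have hs0 : 0 ≤ s := by
    have : Real.exp (-ξ) ≤ Real.exp ξ := Real.exp_le_exp.mpr (by linarith)
    simp only [hs]; linarith
  set fA : D → ℝ := fun d => ∫ w, f d w ∂PS with hfAdef
  set fO : D → ℝ := fun d => ∫ w, f d w ∂PO with hfOdef
  have hmeasd : ∀ d, Measurable fun w => f d w := fun d =>
    hf_meas.comp measurable_prodMk_left
  have hintf : ∀ d (P : Measure W), IsProbabilityMeasure P →
      Integrable (fun w => f d w) P := by
    intro d P hP
    refine (integrable_const (fB d * Real.exp ξ)).mono'
      (hmeasd d).aestronglyMeasurable (ae_of_all _ fun w => ?_)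
    rw [Real.norm_eq_abs, abs_of_pos (hf_pos d w)]
    exact (hfb d w).2
  have hmix : ∀ (P : Measure W), IsProbabilityMeasure P → ∀ d,
      fB d * Real.exp (-ξ) ≤ (∫ w, f d w ∂P) ∧ (∫ w, f d w ∂P) ≤ fB d * Real.exp ξ := by
    intro P hP d
    constructor
    · have h := integral_mono (integrable_const (fB d * Real.exp (-ξ))) (hintf d P hP)
        (fun w => (hfb d w).1)
      simpa using h
    · have h := integral_mono (hintf d P hP) (integrable_const (fB d * Real.exp ξ))
        (fun w => (hfb d w).2)
      simpa using h
  have hfA_lb : ∀ d, fB d * Real.exp (-ξ) ≤ fA d := fun d => (hmix PS ‹_› d).1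
  have hfA_ub : ∀ d, fA d ≤ fB d * Real.exp ξ := fun d => (hmix PS ‹_› d).2
  have hfO_lb : ∀ d, fB d * Real.exp (-ξ) ≤ fO d := fun d => (hmix PO ‹_› d).1
  have hfO_ub : ∀ d, fO d ≤ fB d * Real.exp ξ := fun d => (hmix PO ‹_› d).2
  have hLpos : ∀ d, 0 < fB d * Real.exp (-ξ) := fun d => mul_pos (hfB_pos d) (Real.exp_pos _)
  have hfA_pos : ∀ d, 0 < fA d := fun d => (hLpos d).trans_le (hfA_lb d)
  have hfO_pos : ∀ d, 0 < fO d := fun d => (hLpos d).trans_le (hfO_lb d)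
  -- difference bound
  have hdiff : ∀ d, |fA d - fO d| ≤ fB d * s * T := by
    intro d
    have hab : fB d * Real.exp (-ξ) ≤ fB d * Real.exp ξ :=
      mul_le_mul_of_nonneg_left (Real.exp_le_exp.mpr (by linarith)) (hfB_pos d).le
    have h := abs_integral_sub_le_TV PO PS (hmeasd d) hab
      (fun w => (hfb d w).1) (fun w => (hfb d w).2)
    have heq : fB d * Real.exp ξ - fB d * Real.exp (-ξ) = fB d * s := by
      simp only [hs]; ring
    rw [heq] at h
    calc |fA d - fO d| = |(∫ w, f d w ∂PO) - ∫ w, f d w ∂PS| := by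
          rw [abs_sub_comm]
      _ ≤ fB d * s * T := h
  -- measurability of the mixtures
  have hfAm : Measurable fA :=
    (hf_meas.stronglyMeasurable.integral_prod_right' (ν := PS)).measurable
  have hfOm : Measurable fO :=
    (hf_meas.stronglyMeasurable.integral_prod_right' (ν := PO)).measurable
  -- integrability of fB
  have hfB_int : Integrable fB μ := by
    by_contra hc
    rw [integral_undef hc] at hfB_dens
    exact one_ne_zero hfB_dens.symm
  -- the constant
  set K : ℝ := (1 / 2) * (Real.exp (2 * ξ) - 1) ^ 2 * T ^ 2 with hK
  have hM0 : 0 ≤ Real.exp (2 * ξ) - 1 := by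
    have := Real.one_le_exp (by linarith : (0:ℝ) ≤ 2 * ξ)
    linarith
  have hs_eq : s = (Real.exp (2 * ξ) - 1) * Real.exp (-ξ) := by
    rw [sub_mul, ← Real.exp_add, one_mul, show 2 * ξ + -ξ = ξ by ring]
  have hs2 : s ^ 2 ≤ (Real.exp (2 * ξ) - 1) ^ 2 * Real.exp (-ξ) := by
    rw [hs_eq]
    have h1 : 0 < Real.exp (-ξ) := Real.exp_pos _
    nlinarith [sq_nonneg (Real.exp (2 * ξ) - 1)]
  -- pointwise final bound
  have hpt : ∀ d, (fA d - fO d) ^ 2 / (fA d + fO d) ≤ fB d * K := by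
    intro d
    have hden_pos : 0 < 2 * (fB d * Real.exp (-ξ)) := by
      have := hLpos d; linarith
    have hsum : 2 * (fB d * Real.exp (-ξ)) ≤ fA d + fO d := by
      linarith [hfA_lb d, hfO_lb d]
    have hnum : (fA d - fO d) ^ 2 ≤ (fB d * s * T) ^ 2 := by
      calc (fA d - fO d) ^ 2 = |fA d - fO d| ^ 2 := (sq_abs _).symm
        _ ≤ (fB d * s * T) ^ 2 := pow_le_pow_left₀ (abs_nonneg _) (hdiff d) 2
    have hdd : (fA d - fO d) ^ 2 / (fA d + fO d)
        ≤ (fB d * s * T) ^ 2 / (2 * (fB d * Real.exp (-ξ))) :=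
      div_le_div₀ (by positivity) hnum hden_pos hsum
    refine hdd.trans ?_
    rw [div_le_iff₀ hden_pos, hK]
    calc (fB d * s * T) ^ 2 = fB d ^ 2 * T ^ 2 * s ^ 2 := by ring
      _ ≤ fB d ^ 2 * T ^ 2 * ((Real.exp (2 * ξ) - 1) ^ 2 * Real.exp (-ξ)) :=
          mul_le_mul_of_nonneg_left hs2 (by positivity)
      _ = fB d * (1 / 2 * (Real.exp (2 * ξ) - 1) ^ 2 * T ^ 2)
            * (2 * (fB d * Real.exp (-ξ))) := by ring
  -- integrands
  set I1 : D → ℝ := fun d => fA d * Real.log (fA d / ((fA d + fO d) / 2)) with hI1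
  set I2 : D → ℝ := fun d => fO d * Real.log (fO d / ((fA d + fO d) / 2)) with hI2
  have hI1m : Measurable I1 :=
    hfAm.mul ((hfAm.div ((hfAm.add hfOm).div_const 2)).log)
  have hI2m : Measurable I2 :=
    hfOm.mul ((hfOm.div ((hfAm.add hfOm).div_const 2)).log)
  -- bounds on the mid term
  have hmid_lb : ∀ d, fB d * Real.exp (-ξ) ≤ (fA d + fO d) / 2 := by
    intro d; linarith [hfA_lb d, hfO_lb d]
  have hmid_ub : ∀ d, (fA d + fO d) / 2 ≤ fB d * Real.exp (-ξ) * Real.exp (2 * ξ) := by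
    intro d
    have he : fB d * Real.exp (-ξ) * Real.exp (2 * ξ) = fB d * Real.exp ξ := by
      rw [mul_assoc, ← Real.exp_add, show -ξ + 2 * ξ = ξ by ring]
    rw [he]; linarith [hfA_ub d, hfO_ub d]
  have hUeq : ∀ d, fB d * Real.exp ξ = fB d * Real.exp (-ξ) * Real.exp (2 * ξ) := by
    intro d; rw [mul_assoc, ← Real.exp_add, show -ξ + 2 * ξ = ξ by ring]
  have hlog1 : ∀ d, |Real.log (fA d / ((fA d + fO d) / 2))| ≤ 2 * ξ := by
    intro d
    exact abs_log_ratio_le ξ hξ (hLpos d) (hfA_lb d) ((hfA_ub d).trans_eq (hUeq d))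
      (hmid_lb d) (hmid_ub d)
  have hlog2 : ∀ d, |Real.log (fO d / ((fA d + fO d) / 2))| ≤ 2 * ξ := by
    intro d
    exact abs_log_ratio_le ξ hξ (hLpos d) (hfO_lb d) ((hfO_ub d).trans_eq (hUeq d))
      (hmid_lb d) (hmid_ub d)
  -- integrability of the integrands
  have hI1int : Integrable I1 μ := by
    refine (hfB_int.const_mul (Real.exp ξ * (2 * ξ))).mono'
      hI1m.aestronglyMeasurable (ae_of_all _ fun d => ?_)
    rw [Real.norm_eq_abs, hI1]
    simp only
    rw [abs_mul, abs_of_pos (hfA_pos d)]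
    calc fA d * |Real.log (fA d / ((fA d + fO d) / 2))|
        ≤ (fB d * Real.exp ξ) * (2 * ξ) :=
          mul_le_mul (hfA_ub d) (hlog1 d) (abs_nonneg _)
            (mul_pos (hfB_pos d) (Real.exp_pos _)).le
      _ = Real.exp ξ * (2 * ξ) * fB d := by ring
  have hI2int : Integrable I2 μ := by
    refine (hfB_int.const_mul (Real.exp ξ * (2 * ξ))).mono'
      hI2m.aestronglyMeasurable (ae_of_all _ fun d => ?_)
    rw [Real.norm_eq_abs, hI2]
    simp only
    rw [abs_mul, abs_of_pos (hfO_pos d)]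
    calc fO d * |Real.log (fO d / ((fA d + fO d) / 2))|
        ≤ (fB d * Real.exp ξ) * (2 * ξ) :=
          mul_le_mul (hfO_ub d) (hlog2 d) (abs_nonneg _)
            (mul_pos (hfB_pos d) (Real.exp_pos _)).le
      _ = Real.exp ξ * (2 * ξ) * fB d := by ring
  -- assemble
  have hJS : JSdiv μ fA fO = (1 / 2) * ((∫ d, I1 d ∂μ) + ∫ d, I2 d ∂μ) := by
    simp only [JSdiv, hI1, hI2]; ring
  have hmono : (∫ d, (I1 d + I2 d) ∂μ) ≤ ∫ d, fB d * K ∂μ := by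
    refine integral_mono_of_nonneg (ae_of_all _ fun d => ?_) (hfB_int.mul_const K)
      (ae_of_all _ fun d => ?_)
    · exact js_pointwise_nonneg (hfA_pos d) (hfO_pos d)
    · exact (js_pointwise_le (hfA_pos d) (hfO_pos d)).trans (hpt d)
  have hKint : ∫ d, fB d * K ∂μ = K := by
    rw [integral_mul_const, hfB_dens, one_mul]
  have hfinal : JSdiv μ fA fO ≤ (1 / 2) * K := by
    rw [hJS, ← integral_add hI1int hI2int]
    have := hmono.trans_eq hKint
    linarith
  refine hfinal.trans_eq ?_
  rw [hK]; ring
end
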